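/- Every connected filtered bialgebra is a Hopf algebra: if A is a bialgebra over a field k equipped with a connected increasing filtration, then there exists a linear map S : A → A (an antipode) with S ∗ id = η∘ε = id ∗ S, where η : k → A is λ ↦ λ·1. -/

import Mathlib

/-!
In the convolution algebra of `A →ₗ[k] A` write `id = 1 - φ` with `φ = ηε - id`. Then `φ 1 = 0`,
and since `Δx = x ⊗ 1 + 1 ⊗ x + (a tensor in F (n-1) ⊗ F (n-1))` for `x ∈ F n`, induction on `n`
shows that `φ ^ m` vanishes on `F n` for `m > n`. So the geometric series `∑ φ ^ i` is locally
finite: its partial sums stabilise on each `F n` and glue to a linear map `S`. As `Δ` maps `F n`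
into `F n ⊗ F n`, on `F n` the products `S * id` and `id * S` may be computed with the partial sum
`∑_{i ≤ n} φ ^ i` in place of `S`, where they equal `1 - φ ^ (n + 1) = 1`.
-/

open Coalgebra TensorProduct WithConv LinearMap

theorem LinearMap.exists_eq_of_directed_of_compatible {ι R M N : Type*} [Preorder ι]
    [IsDirectedOrder ι] [Semiring R] [AddCommMonoid M] [Module R M]
    [AddCommMonoid N] [Module R N] (F : ι → Submodule R M) (hmono : Monotone F)
    (hmem : ∀ x, ∃ i, x ∈ F i) (f : ι → M →ₗ[R] N)
    (hf : ∀ i j, i ≤ j → ∀ x ∈ F i, f j x = f i x) :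
    ∃ g : M →ₗ[R] N, ∀ i, ∀ x ∈ F i, g x = f i x := by
  choose d hd using hmem
  have hd_eq {x : M} {i : ι} (hx : x ∈ F i) : f (d x) x = f i x := by
    obtain ⟨j, hij, hdj⟩ := exists_ge_ge i (d x)
    rw [← hf _ _ hdj _ (hd x), hf _ _ hij _ hx]
  refine ⟨{ toFun x := f (d x) x, map_add' x y := ?_, map_smul' c x := ?_ }, fun i x hx ↦ hd_eq hx⟩
  · obtain ⟨j, hxj, hyj⟩ := exists_ge_ge (d x) (d y)
    have hx : x ∈ F j := hmono hxj (hd x)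
    have hy : y ∈ F j := hmono hyj (hd y)
    simp only [hd_eq (add_mem hx hy), hd_eq hx, hd_eq hy, map_add]
  · simp only [hd_eq (Submodule.smul_mem _ c (hd x)), map_smul, RingHom.id_apply]

theorem TensorProduct.map_mapIncl_congr {R M M' N N' : Type*} [CommSemiring R]
    [AddCommMonoid M] [Module R M] [AddCommMonoid M'] [Module R M'] [AddCommMonoid N] [Module R N]
    [AddCommMonoid N'] [Module R N'] {P : Submodule R M} {Q : Submodule R M'}
    {f f' : M →ₗ[R] N} {g g' : M' →ₗ[R] N'} (hf : ∀ x ∈ P, f x = f' x) (hg : ∀ y ∈ Q, g y = g' y)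
    (t : P ⊗[R] Q) : map f g (mapIncl P Q t) = map f' g' (mapIncl P Q t) := by
  have hfP : f ∘ₗ P.subtype = f' ∘ₗ P.subtype := LinearMap.ext fun x ↦ hf x x.2
  have hgQ : g ∘ₗ Q.subtype = g' ∘ₗ Q.subtype := LinearMap.ext fun y ↦ hg y y.2
  simp only [mapIncl, map_map, hfP, hgQ]

theorem LinearMap.convMul_apply_congr {R C B : Type*} [CommSemiring R] [AddCommMonoid C]
    [Module R C] [CoalgebraStruct R C] [Semiring B] [Algebra R B] {P Q : Submodule R C} {c : C}
    (hc : comul c ∈ range (mapIncl P Q)) {f f' g g' : WithConv (C →ₗ[R] B)}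
    (hf : ∀ x ∈ P, f x = f' x) (hg : ∀ y ∈ Q, g y = g' y) : (f * g) c = (f' * g') c := by
  obtain ⟨t, ht⟩ := hc
  rw [convMul_apply, convMul_apply, ← ht, map_mapIncl_congr hf hg]

namespace Bialgebra

variable {k A : Type*} [CommSemiring k] [Ring A] [Bialgebra k A]

structure IsConnectedFiltration (F : ℕ → Submodule k A) : Prop where
  monotone : Monotone F
  zero_eq : F 0 = Submodule.span k {(1 : A)}
  iSup_eq_top : ⨆ n, F n = ⊤
  comul_sub_mem : ∀ n, 1 ≤ n → ∀ x ∈ F n,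
    comul (R := k) x - x ⊗ₜ[k] (1 : A) - (1 : A) ⊗ₜ[k] x ∈ range (mapIncl (F (n - 1)) (F (n - 1)))

namespace IsConnectedFiltration

variable {F : ℕ → Submodule k A}

theorem exists_mem (hF : IsConnectedFiltration F) (x : A) : ∃ n, x ∈ F n :=
  (Submodule.mem_iSup_of_directed F hF.monotone.directed_le).mp (hF.iSup_eq_top ▸ Submodule.mem_top)

theorem one_mem (hF : IsConnectedFiltration F) (n : ℕ) : (1 : A) ∈ F n :=
  hF.monotone n.zero_le (hF.zero_eq ▸ Submodule.mem_span_singleton_self 1)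

theorem comul_eq_add (hF : IsConnectedFiltration F) {n : ℕ} {x : A} (hx : x ∈ F (n + 1)) :
    ∃ t, comul (R := k) x = mapIncl (F n) (F n) t + x ⊗ₜ 1 + 1 ⊗ₜ x := by
  obtain ⟨t, ht⟩ := hF.comul_sub_mem (n + 1) (Nat.le_add_left 1 n) x hx
  refine ⟨t, ?_⟩
  rw [show mapIncl (F n) (F n) t = _ from ht]
  abel

theorem comul_mem_range_mapIncl (hF : IsConnectedFiltration F) {n : ℕ} {x : A} (hx : x ∈ F n) :
    comul (R := k) x ∈ range (mapIncl (F n) (F n)) := by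
  have tmul_mem {y z : A} (hy : y ∈ F n) (hz : z ∈ F n) : y ⊗ₜ[k] z ∈ range (mapIncl (F n) (F n)) :=
    range_mapIncl (F n) (F n) ▸ Submodule.apply_mem_map₂ _ hy hz
  cases n with
  | zero =>
    rw [hF.zero_eq, Submodule.mem_span_singleton] at hx
    obtain ⟨c, rfl⟩ := hx
    rw [map_smul, comul_one, Algebra.TensorProduct.one_def]
    exact Submodule.smul_mem _ c (tmul_mem (hF.one_mem 0) (hF.one_mem 0))
  | succ n =>
    obtain ⟨t, ht⟩ := hF.comul_eq_add hx
    rw [ht]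
    refine add_mem (add_mem ?_ (tmul_mem hx (hF.one_mem _))) (tmul_mem (hF.one_mem _) hx)
    exact range_mapIncl_mono (hF.monotone n.le_succ) (hF.monotone n.le_succ) ⟨t, rfl⟩

theorem pow_apply_eq_zero (hF : IsConnectedFiltration F) {φ : WithConv (A →ₗ[k] A)}
    (hφ : φ 1 = 0) {n m : ℕ} (hnm : n < m) {x : A} (hx : x ∈ F n) : (φ ^ m) x = 0 := by
  induction n generalizing m x with
  | zero =>
    obtain ⟨m, rfl⟩ := Nat.exists_eq_succ_of_ne_zero hnm.ne'
    rw [hF.zero_eq, Submodule.mem_span_singleton] at hx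
    obtain ⟨c, rfl⟩ := hx
    simp [pow_succ', comul_one, Algebra.TensorProduct.one_def, hφ]
  | succ n ih =>
    obtain ⟨m, rfl⟩ := Nat.exists_eq_succ_of_ne_zero (by omega : m ≠ 0)
    have hpow {y : A} (hy : y ∈ F n) : (φ ^ m) y = 0 := ih (by omega) hy
    obtain ⟨t, ht⟩ := hF.comul_eq_add hx
    simp only [pow_succ', convMul_apply, ht, map_add]
    rw [map_mapIncl_congr (f' := φ.ofConv) (g' := 0) (fun _ _ ↦ rfl) fun y hy ↦ hpow hy]
    simp [hφ, hpow (hF.one_mem n)]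

theorem geom_sum_apply_eq (hF : IsConnectedFiltration F) {φ : WithConv (A →ₗ[k] A)}
    (hφ : φ 1 = 0) {n m : ℕ} (hnm : n ≤ m) {x : A} (hx : x ∈ F n) :
    (∑ i ∈ Finset.range (m + 1), φ ^ i) x = (∑ i ∈ Finset.range (n + 1), φ ^ i) x := by
  induction m, hnm using Nat.le_induction with
  | base => rfl
  | succ m hnm ih =>
    rw [Finset.sum_range_succ, ofConv_add, LinearMap.add_apply, ih,
      hF.pow_apply_eq_zero hφ (by omega) hx, add_zero]

theorem isUnit_toConv_id (hF : IsConnectedFiltration F) :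
    IsUnit (toConv (LinearMap.id : A →ₗ[k] A)) := by
  set φ : WithConv (A →ₗ[k] A) := 1 - toConv LinearMap.id
  have hφ : φ 1 = 0 := by simp [φ]
  have hid : toConv LinearMap.id = 1 - φ := by simp [φ]
  obtain ⟨S, hS⟩ := LinearMap.exists_eq_of_directed_of_compatible F hF.monotone hF.exists_mem
    (fun n ↦ (∑ i ∈ Finset.range (n + 1), φ ^ i).ofConv) fun n m hnm x hx ↦
      hF.geom_sum_apply_eq hφ hnm hx
  refine isUnit_iff_exists.mpr ⟨toConv S, ?_, ?_⟩ <;> ext x <;> obtain ⟨n, hx⟩ := hF.exists_mem x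
  · rw [convMul_apply_congr (hF.comul_mem_range_mapIncl hx) (fun _ _ ↦ rfl)
      (g' := ∑ i ∈ Finset.range (n + 1), φ ^ i) (hS n), hid, mul_neg_geom_sum]
    simp [hF.pow_apply_eq_zero hφ (Nat.lt_succ_self n) hx]
  · rw [convMul_apply_congr (hF.comul_mem_range_mapIncl hx)
      (f' := ∑ i ∈ Finset.range (n + 1), φ ^ i) (hS n) (fun _ _ ↦ rfl), hid, geom_sum_mul_neg]
    simp [hF.pow_apply_eq_zero hφ (Nat.lt_succ_self n) hx]

end IsConnectedFiltration

end Bialgebra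

/-- every connected filtered bialgebra is a Hopf algebra: if `A` is a
bialgebra over a field `k` with a connected increasing filtration `F` (i.e. `F` is
monotone, `F 0 = k·1`, `⋃ F n = A`, and for every `n ≥ 1` and `x ∈ F n` the element
`Δ(x) − x ⊗ 1 − 1 ⊗ x` lies in the image of `F (n−1) ⊗ F (n−1)` in `A ⊗ A`), then
there is a linear map `S : A → A` with `S ∗ id = η∘ε = id ∗ S`, where
`f ∗ g = m ∘ (f ⊗ g) ∘ Δ` and `η : k → A`, `λ ↦ λ·1`. -/
theorem connected_filtered_bialgebra_hasAntipode
    {k A : Type*} [Field k] [Ring A] [Bialgebra k A]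
    (F : ℕ → Submodule k A) (hmono : Monotone F)
    (h0 : F 0 = Submodule.span k {(1 : A)})
    (hsup : (⨆ n, F n) = ⊤)
    (hconn : ∀ n, 1 ≤ n → ∀ x ∈ F n,
      Coalgebra.comul (R := k) x - x ⊗ₜ[k] (1 : A) - (1 : A) ⊗ₜ[k] x ∈
        LinearMap.range (TensorProduct.map (F (n - 1)).subtype (F (n - 1)).subtype)) :
    ∃ S : A →ₗ[k] A,
      (LinearMap.mul' k A ∘ₗ TensorProduct.map S LinearMap.id ∘ₗ Coalgebra.comul
          = Algebra.linearMap k A ∘ₗ Coalgebra.counit) ∧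
      (LinearMap.mul' k A ∘ₗ TensorProduct.map LinearMap.id S ∘ₗ Coalgebra.comul
          = Algebra.linearMap k A ∘ₗ Coalgebra.counit) := by
  obtain ⟨S, hidS, hSid⟩ := isUnit_iff_exists.mp
    (Bialgebra.IsConnectedFiltration.isUnit_toConv_id ⟨hmono, h0, hsup, hconn⟩)
  exact ⟨S.ofConv, congrArg ofConv hSid, congrArg ofConv hidS⟩
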